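/- Let α, β > 0 and let X and Y be independent random variables with Lévy densities f_α and f_β respectively. Then the ratio X/(X+Y) has probability density function p ↦ (1 / (π √(p(1−p)))) · (αβ / (α² (1−p) + β² p)) on (0,1) with respect to Lebesgue measure. -/

import Mathlib

/-!
Write `(x, y) = (p σ, (1 - p) σ)`, i.e. `p = x / (x + y)` and `σ = x + y`; this substitution has
Jacobian `σ`, so the ratio has density `p ↦ ∫₀^∞ σ f_α(p σ) f_β((1 - p) σ) dσ`. In that integrand
the exponents add up to `-a / σ` with `a = (α² (1 - p) + β² p) / (4 p (1 - p))` and the powers of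
`σ` to `σ⁻²`, so the integral is a constant times `∫₀^∞ e^{-a/σ} σ⁻² dσ = 1 / a`.
-/

open MeasureTheory ProbabilityTheory Real

/-- The Lévy density with scale parameter `α > 0`:
`f_α(x) = (α / (2 √(π x³))) e^{-α²/(4x)}` for `x > 0`, and `0` for `x ≤ 0`. -/
noncomputable def levyDensity (α : ℝ) (x : ℝ) : ℝ :=
  if 0 < x then α / (2 * Real.sqrt (Real.pi * x ^ 3)) * Real.exp (-α ^ 2 / (4 * x)) else 0

open Set
open scoped ENNReal

lemma levyDensity_of_pos (α : ℝ) {x : ℝ} (hx : 0 < x) :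
    levyDensity α x = α / (2 * √π * (x * √x)) * exp (-α ^ 2 / (4 * x)) := by
  rw [levyDensity, if_pos hx, sqrt_mul pi_pos.le, show x ^ 3 = x ^ 2 * x by ring,
    sqrt_mul (sq_nonneg x), sqrt_sq hx.le, mul_assoc]

lemma levyDensity_of_nonpos (α : ℝ) {x : ℝ} (hx : x ≤ 0) : levyDensity α x = 0 :=
  if_neg hx.not_gt

lemma levyDensity_nonneg {α : ℝ} (hα : 0 ≤ α) (x : ℝ) : 0 ≤ levyDensity α x := by
  unfold levyDensity
  split_ifs <;> positivity

@[fun_prop]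
lemma measurable_levyDensity (α : ℝ) : Measurable (levyDensity α) :=
  Measurable.ite measurableSet_Ioi (by fun_prop) (by fun_prop)

def ofRatioSum (q : ℝ × ℝ) : ℝ × ℝ := (q.1 * q.2, (1 - q.1) * q.2)

noncomputable def ofRatioSumFDeriv (q : ℝ × ℝ) : ℝ × ℝ →L[ℝ] ℝ × ℝ :=
  LinearMap.toContinuousLinearMap
    (Matrix.toLin (Module.Basis.finTwoProd ℝ) (Module.Basis.finTwoProd ℝ)
      !![q.2, q.1; -q.2, 1 - q.1])

lemma hasFDerivAt_ofRatioSum (q : ℝ × ℝ) : HasFDerivAt ofRatioSum (ofRatioSumFDeriv q) q := by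
  rw [ofRatioSumFDeriv, Matrix.toLin_finTwoProd_toContinuousLinearMap]
  have hfst : HasFDerivAt (fun q : ℝ × ℝ => q.1) (ContinuousLinearMap.fst ℝ ℝ ℝ) q :=
    hasFDerivAt_fst
  have hsnd : HasFDerivAt (fun q : ℝ × ℝ => q.2) (ContinuousLinearMap.snd ℝ ℝ ℝ) q :=
    hasFDerivAt_snd
  convert! (hfst.fun_mul hsnd).prodMk (((hasFDerivAt_const 1 q).sub hfst).fun_mul hsnd) using 1
  ext <;> simp

lemma det_ofRatioSumFDeriv (q : ℝ × ℝ) : (ofRatioSumFDeriv q).det = q.2 := by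
  simp only [ofRatioSumFDeriv, LinearMap.det_toContinuousLinearMap, LinearMap.det_toLin,
    Matrix.det_fin_two_of]
  ring

lemma injOn_ofRatioSum {s : Set ℝ} : InjOn ofRatioSum (s ×ˢ Ioi 0) := by
  rintro ⟨p, σ⟩ ⟨-, hσ⟩ ⟨p', σ'⟩ - h
  simp only [ofRatioSum, Prod.mk.injEq] at h
  have hσσ' : σ = σ' := by linarith [h.1, h.2]
  subst hσσ'
  simp [mul_right_cancel₀ (ne_of_gt hσ) h.1]

lemma ofRatioSum_image_prod_Ioi (s : Set ℝ) :
    ofRatioSum '' (s ×ˢ Ioi 0) = {q | 0 < q.1 + q.2} ∩ (fun q => q.1 / (q.1 + q.2)) ⁻¹' s := by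
  ext ⟨x, y⟩
  constructor
  · rintro ⟨⟨p, σ⟩, ⟨hp, hσ⟩, he⟩
    simp only [ofRatioSum, Prod.mk.injEq] at he
    obtain ⟨rfl, rfl⟩ := he
    have hsum : p * σ + (1 - p) * σ = σ := by ring
    refine ⟨by simpa [hsum] using hσ, ?_⟩
    simpa [hsum, mul_div_assoc, div_self (ne_of_gt (mem_Ioi.mp hσ))] using hp
  · rintro ⟨hxy, hs⟩
    simp only [mem_ofPred_eq] at hxy
    refine ⟨(x / (x + y), x + y), ⟨hs, hxy⟩, ?_⟩
    simp only [ofRatioSum, Prod.mk.injEq]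
    constructor <;> field_simp; ring

theorem map_div_add_withDensity {h : ℝ × ℝ → ℝ≥0∞} (hh : Measurable h)
    (h_zero : ∀ q : ℝ × ℝ, q.1 + q.2 ≤ 0 → h q = 0) :
    (volume.withDensity h).map (fun q => q.1 / (q.1 + q.2)) =
      volume.withDensity (fun p => ∫⁻ σ in Ioi 0, ENNReal.ofReal σ * h (ofRatioSum (p, σ))) := by
  have hφ : Measurable fun q : ℝ × ℝ => q.1 / (q.1 + q.2) := by fun_prop
  have hH : MeasurableSet {q : ℝ × ℝ | 0 < q.1 + q.2} :=
    measurableSet_lt (by fun_prop) (by fun_prop)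
  have h_supp : Function.support h ⊆ {q | 0 < q.1 + q.2} := fun q hq =>
    lt_of_not_ge fun hle => hq (h_zero q hle)
  ext s hs
  have hA : MeasurableSet (s ×ˢ Ioi (0 : ℝ)) := hs.prod measurableSet_Ioi
  rw [Measure.map_apply hφ hs, withDensity_apply _ (hφ hs), withDensity_apply _ hs]
  calc ∫⁻ q in (fun q => q.1 / (q.1 + q.2)) ⁻¹' s, h q
      = ∫⁻ q in {q | 0 < q.1 + q.2} ∩ (fun q => q.1 / (q.1 + q.2)) ⁻¹' s, h q := by
        rw [← Measure.restrict_restrict hH, setLIntegral_eq_of_support_subset h_supp]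
    _ = ∫⁻ q in s ×ˢ Ioi 0, ENNReal.ofReal |(ofRatioSumFDeriv q).det| * h (ofRatioSum q) := by
        rw [← ofRatioSum_image_prod_Ioi]
        exact lintegral_image_eq_lintegral_abs_det_fderiv_mul volume hA
          (fun q _ => (hasFDerivAt_ofRatioSum q).hasFDerivWithinAt) injOn_ofRatioSum h
    _ = ∫⁻ q in s ×ˢ Ioi 0, ENNReal.ofReal q.2 * h (ofRatioSum q) := by
        refine setLIntegral_congr_fun hA fun q hq => ?_
        rw [det_ofRatioSumFDeriv, abs_of_pos hq.2]
    _ = ∫⁻ p in s, ∫⁻ σ in Ioi 0, ENNReal.ofReal σ * h (ofRatioSum (p, σ)) := by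
        rw [Measure.volume_eq_prod, ← Measure.prod_restrict, lintegral_prod]
        have : Measurable ofRatioSum := by unfold ofRatioSum; fun_prop
        fun_prop

lemma lintegral_exp_neg_div_div_sq {a : ℝ} (ha : 0 < a) :
    ∫⁻ σ in Ioi (0 : ℝ), ENNReal.ofReal (exp (-(a / σ)) / σ ^ 2) = ENNReal.ofReal a⁻¹ := by
  have himage : (fun t : ℝ => t⁻¹) '' Ioi 0 = Ioi 0 := by
    ext t
    exact ⟨by rintro ⟨u, hu : 0 < u, rfl⟩; exact inv_pos.mpr hu,
      fun ht : 0 < t => ⟨t⁻¹, inv_pos.mpr ht, inv_inv t⟩⟩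
  have hderiv : ∀ t ∈ Ioi (0 : ℝ), HasDerivWithinAt (fun t : ℝ => t⁻¹) (-(t ^ 2)⁻¹) (Ioi 0) t :=
    fun t ht => (hasDerivAt_inv (ne_of_gt ht)).hasDerivWithinAt
  rw [← himage,
    lintegral_image_eq_lintegral_abs_deriv_mul measurableSet_Ioi hderiv inv_injective.injOn]
  calc ∫⁻ t in Ioi 0, ENNReal.ofReal |-(t ^ 2)⁻¹| * ENNReal.ofReal (exp (-(a / t⁻¹)) / t⁻¹ ^ 2)
      = ∫⁻ t in Ioi 0, ENNReal.ofReal (exp (-a * t)) := by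
        refine setLIntegral_congr_fun measurableSet_Ioi fun t (ht : 0 < t) => ?_
        rw [← ENNReal.ofReal_mul (abs_nonneg _), abs_neg, abs_of_pos (by positivity)]
        congr 1
        field_simp
    _ = ENNReal.ofReal a⁻¹ := by
        rw [← ofReal_integral_eq_lintegral_ofReal (exp_neg_integrableOn_Ioi 0 ha)
          (ae_of_all _ fun t => (exp_pos _).le), integral_exp_mul_Ioi (neg_lt_zero.mpr ha)]
        simp

lemma mul_levyDensity_mul_levyDensity {α β p σ : ℝ} (hp : p ∈ Ioo 0 1) (hσ : 0 < σ) :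
    σ * (levyDensity α (p * σ) * levyDensity β ((1 - p) * σ)) =
      α * β / (4 * π * (p * (1 - p)) * √(p * (1 - p))) *
        (exp (-((α ^ 2 * (1 - p) + β ^ 2 * p) / (4 * (p * (1 - p))) / σ)) / σ ^ 2) := by
  obtain ⟨hp0, hp1⟩ := hp
  have hq : 0 < 1 - p := sub_pos.mpr hp1
  have hexp : exp (-α ^ 2 / (4 * (p * σ))) * exp (-β ^ 2 / (4 * ((1 - p) * σ))) =
      exp (-((α ^ 2 * (1 - p) + β ^ 2 * p) / (4 * (p * (1 - p))) / σ)) := by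
    rw [← exp_add]
    congr 1
    field_simp
    ring
  rw [levyDensity_of_pos α (mul_pos hp0 hσ), levyDensity_of_pos β (mul_pos hq hσ),
    sqrt_mul hp0.le, sqrt_mul hq.le, sqrt_mul hp0.le, ← hexp]
  have : 0 < √σ := sqrt_pos.mpr hσ
  have : 0 < √p := sqrt_pos.mpr hp0
  have : 0 < √(1 - p) := sqrt_pos.mpr hq
  have : 0 < √π := sqrt_pos.mpr pi_pos
  field_simp
  rw [sq_sqrt hσ.le, sq_sqrt pi_pos.le]
  ring

noncomputable def levyRatioDensity (α β p : ℝ) : ℝ :=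
  1 / (π * √(p * (1 - p))) * (α * β / (α ^ 2 * (1 - p) + β ^ 2 * p))

lemma levyRatioDensity_of_notMem (α β : ℝ) {p : ℝ} (hp : p ∉ Ioo 0 1) :
    levyRatioDensity α β p = 0 := by
  have : p * (1 - p) ≤ 0 := by
    rcases not_and_or.mp hp with h | h <;> push Not at h <;> nlinarith
  simp [levyRatioDensity, sqrt_eq_zero'.mpr this]

lemma lintegral_mul_levyDensity_mul_levyDensity {α β : ℝ} (hα : 0 < α) (hβ : 0 < β) (p : ℝ) :
    ∫⁻ σ in Ioi 0, ENNReal.ofReal σ *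
        (ENNReal.ofReal (levyDensity α (p * σ)) * ENNReal.ofReal (levyDensity β ((1 - p) * σ))) =
      ENNReal.ofReal (levyRatioDensity α β p) := by
  by_cases hp : p ∈ Ioo 0 1
  · obtain ⟨hp0, hp1⟩ := hp
    have hq : 0 < 1 - p := sub_pos.mpr hp1
    set a := (α ^ 2 * (1 - p) + β ^ 2 * p) / (4 * (p * (1 - p)))
    set C := α * β / (4 * π * (p * (1 - p)) * √(p * (1 - p)))
    have ha : 0 < a := by positivity
    have hC : 0 ≤ C := by positivity
    calc _ = ∫⁻ σ in Ioi 0, ENNReal.ofReal C * ENNReal.ofReal (exp (-(a / σ)) / σ ^ 2) := by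
          refine setLIntegral_congr_fun measurableSet_Ioi fun σ (hσ : 0 < σ) => ?_
          rw [← ENNReal.ofReal_mul (levyDensity_nonneg hα.le _), ← ENNReal.ofReal_mul hσ.le,
            ← ENNReal.ofReal_mul hC, mul_levyDensity_mul_levyDensity ⟨hp0, hp1⟩ hσ]
      _ = ENNReal.ofReal (C * a⁻¹) := by
          rw [lintegral_const_mul' _ _ ENNReal.ofReal_ne_top, lintegral_exp_neg_div_div_sq ha,
            ENNReal.ofReal_mul hC]
      _ = ENNReal.ofReal (levyRatioDensity α β p) := by
          congr 1
          have : 0 < √(p * (1 - p)) := sqrt_pos.mpr (by positivity)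
          simp only [C, a, levyRatioDensity]
          field_simp
  · rw [levyRatioDensity_of_notMem α β hp, ENNReal.ofReal_zero]
    refine (setLIntegral_congr_fun measurableSet_Ioi fun σ (hσ : 0 < σ) => ?_).trans lintegral_zero
    rcases not_and_or.mp hp with h | h <;> push Not at h
    · rw [levyDensity_of_nonpos α (mul_nonpos_of_nonpos_of_nonneg h hσ.le)]
      simp
    · rw [levyDensity_of_nonpos β (mul_nonpos_of_nonpos_of_nonneg (by linarith) hσ.le)]
      simp

/-- if `X` and `Y` are independent with Lévy densities `f_α` and `f_β`,
then `X / (X + Y)` has density `p ↦ (1/(π √(p(1-p)))) · (αβ / (α²(1-p) + β²p))` on `(0,1)`.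
(The displayed formula vanishes outside `(0,1)`.) -/
theorem levy_ratio_density
    {Ω : Type*} [MeasurableSpace Ω] (P : Measure Ω) [IsProbabilityMeasure P]
    (α β : ℝ) (hα : 0 < α) (hβ : 0 < β)
    (X Y : Ω → ℝ) (hX : Measurable X) (hY : Measurable Y)
    (hindep : IndepFun X Y P)
    (hXpdf : P.map X = volume.withDensity (fun x => ENNReal.ofReal (levyDensity α x)))
    (hYpdf : P.map Y = volume.withDensity (fun x => ENNReal.ofReal (levyDensity β x))) :
    P.map (fun ω => X ω / (X ω + Y ω)) =
      volume.withDensity (fun p => ENNReal.ofReal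
        (1 / (Real.pi * Real.sqrt (p * (1 - p))) *
          (α * β / (α ^ 2 * (1 - p) + β ^ 2 * p)))) := by
  have hjoint : P.map (fun ω => (X ω, Y ω)) = volume.withDensity fun q : ℝ × ℝ =>
      ENNReal.ofReal (levyDensity α q.1) * ENNReal.ofReal (levyDensity β q.2) := by
    rw [(indepFun_iff_map_prod_eq_prod_map_map hX.aemeasurable hY.aemeasurable).mp hindep,
      hXpdf, hYpdf, prod_withDensity (by fun_prop) (by fun_prop), Measure.volume_eq_prod]
  have h_zero : ∀ q : ℝ × ℝ, q.1 + q.2 ≤ 0 →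
      ENNReal.ofReal (levyDensity α q.1) * ENNReal.ofReal (levyDensity β q.2) = 0 := by
    intro q hq
    rcases le_or_gt q.1 0 with h | h
    · simp [levyDensity_of_nonpos α h]
    · simp [levyDensity_of_nonpos β (by linarith : q.2 ≤ 0)]
  rw [← Function.comp_def (fun q : ℝ × ℝ => q.1 / (q.1 + q.2)) (fun ω => (X ω, Y ω)),
    ← Measure.map_map (by fun_prop) (hX.prodMk hY), hjoint,
    map_div_add_withDensity (by fun_prop) h_zero]
  congr 1
  funext p
  exact lintegral_mul_levyDensity_mul_levyDensity hα hβ p
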